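/- arXiv:1110.3606 — 2 statements merged into one kernel-verified Lean document; each statement's English description precedes it below -/
import Mathlib

section
/- Let A: ℝⁿ → ℝⁿ be a C¹ monotone map (i.e., (A(x)−A(y))·(x−y) ≥ 0 for all x,y) such that the symmetric part of its Jacobian satisfies ∇ˢA(x) ≥ K·Id as quadratic forms for all |x| ≥ R, where K > 0 and R ≥ 0. Then for all x,y with |x| ≥ 2R or |y| ≥ 2R, one has (A(x)−A(y))·(x−y) ≥ (K/3)|x−y|². -/
/-!
Restrict `A` to the segment from `y` to `x`: `g t = ⟪A (y + t • (x - y)), x - y⟫` is nondecreasing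
by monotonicity of `A`, `g 1 - g 0 = ⟪A x - A y, x - y⟫`, and `g' t ≥ K ‖x - y‖²` wherever the
segment lies outside the ball of radius `R`. If `‖x‖ ≥ 2R`, the parameters of the part of the
segment inside that ball form a set of diameter at most `2/3`: it is a chord of the ball, so it has
length less than `2R`, and it stays at distance more than `R` from `x`, so it has length less than
`‖x - y‖ - R`; and `min (2R) (‖x - y‖ - R) ≤ 2/3 ‖x - y‖`. Hence the good parameters have total
length at least `1/3`.
-/

open Set Metric

open scoped RealInnerProductSpace

theorem mul_sub_sub_diam_le_sub_of_monotone {g : ℝ → ℝ} {p q m : ℝ} {B : Set ℝ}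
    (hg : Monotone g) (hgd : Differentiable ℝ g) (hpq : p ≤ q) (hB : B ⊆ Icc p q)
    (hm : ∀ t ∈ Ioo p q, t ∉ B → m ≤ deriv g t) :
    m * (q - p - diam B) ≤ g q - g p := by
  have mvt : ∀ u w, p ≤ u → u ≤ w → w ≤ q → (∀ t ∈ Ioo u w, t ∉ B) →
      m * (w - u) ≤ g w - g u := fun u w hpu huw hwq hout =>
    (convex_Icc u w).mul_sub_le_image_sub_of_le_deriv hgd.continuous.continuousOn
      hgd.differentiableOn (fun t ht => by
        rw [interior_Icc] at ht
        exact hm t ⟨hpu.trans_lt ht.1, ht.2.trans_le hwq⟩ (hout t ht))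
      u (left_mem_Icc.2 huw) w (right_mem_Icc.2 huw) huw
  rcases B.eq_empty_or_nonempty with rfl | hne
  · simpa using mvt p q le_rfl hpq le_rfl fun t _ => notMem_empty t
  have hbdd : Bornology.IsBounded B := isBounded_Icc p q |>.subset hB
  have hpa : p ≤ sInf B := le_csInf hne fun t ht => (hB ht).1
  have hbq : sSup B ≤ q := csSup_le hne fun t ht => (hB ht).2
  have hab : sInf B ≤ sSup B := csInf_le_csSup hne hbdd.bddBelow hbdd.bddAbove
  have hleft := mvt p (sInf B) le_rfl hpa (hab.trans hbq) fun t ht =>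
    notMem_of_lt_csInf ht.2 hbdd.bddBelow
  have hright := mvt (sSup B) q (hpa.trans hab) hbq le_rfl fun t ht =>
    notMem_of_csSup_lt ht.1 hbdd.bddAbove
  rw [Real.diam_eq hbdd]
  nlinarith [hg hab]

variable {E : Type*} [NormedAddCommGroup E] [InnerProductSpace ℝ E]

theorem diam_setOf_norm_add_smul_sub_lt_le {x y : E} {R : ℝ} (hx : 2 * R ≤ ‖x‖) :
    diam {t ∈ Icc (0 : ℝ) 1 | ‖y + t • (x - y)‖ < R} ≤ 2 / 3 := by
  set L := ‖x - y‖
  have key : ∀ s ∈ Icc (0 : ℝ) 1, ‖y + s • (x - y)‖ < R → ∀ t ∈ Icc (0 : ℝ) 1,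
      ‖y + t • (x - y)‖ < R → s - t ≤ 2 / 3 := by
    intro s ⟨_, hs1⟩ hsR t ⟨ht0, _⟩ htR
    have chord : (s - t) * L < 2 * R := calc
      (s - t) * L ≤ ‖(y + s • (x - y)) - (y + t • (x - y))‖ := by
        rw [add_sub_add_left_eq_sub, ← sub_smul, norm_smul, Real.norm_eq_abs]
        exact mul_le_mul_of_nonneg_right (le_abs_self _) (norm_nonneg _)
      _ ≤ ‖y + s • (x - y)‖ + ‖y + t • (x - y)‖ := norm_sub_le _ _
      _ < 2 * R := by linarith
    have tail : R < (1 - s) * L := calc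
      R < ‖x‖ - ‖y + s • (x - y)‖ := by linarith
      _ ≤ ‖x - (y + s • (x - y))‖ := norm_sub_norm_le _ _
      _ = (1 - s) * L := by
        rw [show x - (y + s • (x - y)) = (1 - s) • (x - y) by module, norm_smul,
          Real.norm_of_nonneg (sub_nonneg.2 hs1)]
    -- `(s - t) L < 2R < 2 (1 - s) L ≤ 2 (1 - (s - t)) L`
    by_contra! h
    nlinarith [norm_nonneg (x - y)]
  refine diam_le_of_forall_dist_le (by norm_num) fun s ⟨hs, hsR⟩ t ⟨ht, htR⟩ => ?_
  rw [Real.dist_eq, abs_sub_le_iff]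
  exact ⟨key s hs hsR t ht htR, key t ht htR s hs hsR⟩

theorem monotone_inner_apply_add_smul {A : E → E} (hA : ∀ x y, 0 ≤ ⟪A x - A y, x - y⟫)
    (y v : E) : Monotone fun t : ℝ => ⟪A (y + t • v), v⟫ := by
  intro s t hst
  have h := hA (y + t • v) (y + s • v)
  rw [add_sub_add_left_eq_sub, ← sub_smul, real_inner_smul_right, inner_sub_left] at h
  rcases hst.eq_or_lt with rfl | hlt
  · rfl
  · exact sub_nonneg.1 (nonneg_of_mul_nonneg_right h (sub_pos.2 hlt))

theorem HasFDerivAt.hasDerivAt_inner_apply_add_smul {A : E → E} {A' : E →L[ℝ] E} {y v : E}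
    {t : ℝ} (hA : HasFDerivAt A A' (y + t • v)) :
    HasDerivAt (fun s : ℝ => ⟪A (y + s • v), v⟫) ⟪A' v, v⟫ t := by
  have hline : HasDerivAt (fun s : ℝ => y + s • v) v t := by
    simpa using ((hasDerivAt_id t).smul_const v).const_add y
  simpa using (hA.comp_hasDerivAt t hline).inner ℝ (hasDerivAt_const t v)

theorem mul_norm_sq_div_three_le_inner_sub {A : E → E} (hA : Differentiable ℝ A) {K R : ℝ}
    (hK : 0 ≤ K) (hmono : ∀ x y, 0 ≤ ⟪A x - A y, x - y⟫)
    (hconv : ∀ x, R ≤ ‖x‖ → ∀ v, K * ‖v‖ ^ 2 ≤ ⟪fderiv ℝ A x v, v⟫)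
    {x y : E} (hx : 2 * R ≤ ‖x‖) :
    K / 3 * ‖x - y‖ ^ 2 ≤ ⟪A x - A y, x - y⟫ := by
  set v := x - y
  set g := fun t : ℝ => ⟪A (y + t • v), v⟫
  have hg : ∀ t, HasDerivAt g ⟪fderiv ℝ A (y + t • v) v, v⟫ t := fun t =>
    (hA _).hasFDerivAt.hasDerivAt_inner_apply_add_smul
  have hdiam : diam {t ∈ Icc (0 : ℝ) 1 | ‖y + t • v‖ < R} ≤ 2 / 3 :=
    diam_setOf_norm_add_smul_sub_lt_le hx
  have hgrowth : K * ‖v‖ ^ 2 * (1 - 0 - diam {t ∈ Icc (0 : ℝ) 1 | ‖y + t • v‖ < R}) ≤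
      g 1 - g 0 :=
    mul_sub_sub_diam_le_sub_of_monotone (monotone_inner_apply_add_smul hmono y v)
      (fun t => (hg t).differentiableAt) zero_le_one (sep_subset _ _) fun t ht hbad => by
        rw [(hg t).deriv]
        exact hconv _ (not_lt.1 fun hlt => hbad ⟨Ioo_subset_Icc_self ht, hlt⟩) v
  have hends : g 1 - g 0 = ⟪A x - A y, v⟫ := by
    simp only [g, v, one_smul, zero_smul, add_zero, add_sub_cancel, inner_sub_left]
  calc K / 3 * ‖v‖ ^ 2 = K * ‖v‖ ^ 2 * (1 - 0 - 2 / 3) := by ring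
    _ ≤ K * ‖v‖ ^ 2 * (1 - 0 - diam {t ∈ Icc (0 : ℝ) 1 | ‖y + t • v‖ < R}) := by gcongr
    _ ≤ g 1 - g 0 := hgrowth
    _ = ⟪A x - A y, v⟫ := hends

theorem stmt_4_general {n : ℕ} (A : EuclideanSpace ℝ (Fin n) → EuclideanSpace ℝ (Fin n))
    (hA : ContDiff ℝ 1 A) (K R : ℝ) (hK : 0 < K)
    (hmono : ∀ x y, 0 ≤ (inner ℝ (A x - A y) (x - y) : ℝ))
    (hconv : ∀ x, R ≤ ‖x‖ → ∀ v, K * ‖v‖ ^ 2 ≤ (inner ℝ (fderiv ℝ A x v) v : ℝ)) :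
    ∀ x y, (2 * R ≤ ‖x‖ ∨ 2 * R ≤ ‖y‖) →
      K / 3 * ‖x - y‖ ^ 2 ≤ (inner ℝ (A x - A y) (x - y) : ℝ) := by
  have hdiff := hA.differentiable one_ne_zero
  rintro x y (hx | hy)
  · exact mul_norm_sq_div_three_le_inner_sub hdiff hK.le hmono hconv hx
  · have h := mul_norm_sq_div_three_le_inner_sub (y := x) hdiff hK.le hmono hconv hy
    rwa [norm_sub_rev, ← neg_sub (A x), ← neg_sub x, inner_neg_neg] at h

/-- If `A : ℝⁿ → ℝⁿ` is a `C¹` monotone vector field whose Jacobian satisfies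
`∇ˢA(x) ≥ K·Id` (as quadratic forms) for `|x| ≥ R`, with `K > 0`, `R ≥ 0`, then
`(A(x)−A(y))·(x−y) ≥ (K/3)|x−y|²` whenever `|x| ≥ 2R` or `|y| ≥ 2R`. -/
theorem stmt_4 {n : ℕ} (A : EuclideanSpace ℝ (Fin n) → EuclideanSpace ℝ (Fin n))
    (hA : ContDiff ℝ 1 A) (K R : ℝ) (hK : 0 < K) (hR : 0 ≤ R)
    (hmono : ∀ x y, 0 ≤ (inner ℝ (A x - A y) (x - y) : ℝ))
    (hconv : ∀ x, R ≤ ‖x‖ → ∀ v, K * ‖v‖ ^ 2 ≤ (inner ℝ (fderiv ℝ A x v) v : ℝ)) :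
    ∀ x y, (2 * R ≤ ‖x‖ ∨ 2 * R ≤ ‖y‖) →
      K / 3 * ‖x - y‖ ^ 2 ≤ (inner ℝ (A x - A y) (x - y) : ℝ) :=
  stmt_4_general A hA K R hK hmono hconv
end

section
/- Second-order expansion underlying the WJ ⇒ Poincaré implication: let f: ℝⁿ → ℝ be smooth with bounded derivatives and φ_ε(x) = |x|²/2 + εf(x). For small ε > 0, φ_ε is strictly convex, its Hessian has eigenvalues 1 + εf_i(x) (where f_i are the eigenvalues of ∇²f(x)), and Δφ_ε(x) + Δφ_ε*(∇φ_ε(x)) − 2n = ε² ‖∇²f(x)‖²_{HS} + o(ε²) as ε → 0, uniformly on compacts. -/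
/-!
Write `H = ∇²f(x)`. The Hessian of `φ_ε` is `1 + εH`, which gives the spectrum at once. The
gradient of `φ_ε` is strongly monotone because `∇f` is `M`-Lipschitz when `‖∇²f‖ ≤ M`, and that
forces strict convexity for `ε M < 1`. For the expansion, the Neumann identity
`(1 + C)⁻¹ = 1 - C + C² - C³ (1 + C)⁻¹` with `C = εH` gives
`tr (1 + C) + tr (1 + C)⁻¹ - 2n = tr C² - tr (C³ (1 + C)⁻¹)`; here `tr C² = ε² ‖H‖²_HS` by the
symmetry of `H`, and in the `ℓ∞` operator norm the remainder is at most `2n ‖C‖³ = O(ε³)`,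
uniformly in `x` since the entries of `H` are bounded by `M`.
-/

open MeasureTheory Matrix Filter

/-- The Hessian matrix of `φ : ℝⁿ → ℝ` at `x`. -/
noncomputable def hessMat {n : ℕ} (φ : (Fin n → ℝ) → ℝ) (x : Fin n → ℝ) :
    Matrix (Fin n) (Fin n) ℝ :=
  fun i j => fderiv ℝ (fun y => fderiv ℝ φ y (Pi.single i 1)) x (Pi.single j 1)

theorem spectrum_one_add_smul {𝕜 A : Type*} [Field 𝕜] [Ring A] [Algebra 𝕜 A] {ε : 𝕜}
    (hε : ε ≠ 0) (a : A) :
    spectrum 𝕜 (1 + ε • a) = (fun d => 1 + ε * d) '' spectrum 𝕜 a := by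
  rw [← map_one (algebraMap 𝕜 A), ← spectrum.singleton_add_eq]
  have hsmul := spectrum.unit_smul_eq_smul a (Units.mk0 ε hε)
  rw [Units.smul_def, Units.val_mk0] at hsmul
  rw [hsmul, Set.singleton_add, ← Set.image_smul, Set.image_image]
  rfl

theorem Matrix.IsSymm.trace_sq {ι R : Type*} [Fintype ι] [DecidableEq ι] [CommSemiring R]
    {A : Matrix ι ι R} (hA : A.IsSymm) : (A ^ 2).trace = ∑ i, ∑ j, A i j ^ 2 := by
  simp only [sq, trace, diag, mul_apply]
  refine Finset.sum_congr rfl fun i _ => Finset.sum_congr rfl fun j _ => ?_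
  rw [hA.apply i j]

theorem sq_norm_le_sum_sq {ι : Type*} [Fintype ι] (v : ι → ℝ) : ‖v‖ ^ 2 ≤ ∑ i, v i ^ 2 := by
  rw [← Real.le_sqrt (norm_nonneg v) (Finset.sum_nonneg fun i _ => sq_nonneg (v i))]
  refine (pi_norm_le_iff_of_nonneg (Real.sqrt_nonneg _)).2 fun i => ?_
  rw [Real.le_sqrt (norm_nonneg _) (Finset.sum_nonneg fun i _ => sq_nonneg (v i)),
    Real.norm_eq_abs, sq_abs]
  exact Finset.single_le_sum (fun j _ => sq_nonneg (v j)) (Finset.mem_univ i)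

theorem tendstoUniformlyOn_of_eventually_dist_le {ι α β : Type*} [PseudoMetricSpace β]
    {F : ι → α → β} {G : α → β} {l : Filter ι} {s : Set α} {b : ι → ℝ}
    (hb : Tendsto b l (nhds 0)) (h : ∀ᶠ i in l, ∀ x ∈ s, dist (G x) (F i x) ≤ b i) :
    TendstoUniformlyOn F G l s :=
  Metric.tendstoUniformlyOn_iff.2 fun η hη => by
    filter_upwards [h, hb.eventually (gt_mem_nhds hη)] with i hi hbi x hx
    exact (hi x hx).trans_lt hbi

theorem StrictConvexOn.of_fderiv_sub_apply_pos {E : Type*} [NormedAddCommGroup E]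
    [NormedSpace ℝ E] {φ : E → ℝ} (hφ : Differentiable ℝ φ)
    (h : ∀ x y, x ≠ y → 0 < (fderiv ℝ φ x - fderiv ℝ φ y) (x - y)) :
    StrictConvexOn ℝ Set.univ φ := by
  refine ⟨convex_univ, fun x _ y _ hxy a b ha hb hab => ?_⟩
  set p : ℝ → E := fun t => x + t • (y - x) with p_def
  have hp (t : ℝ) : HasDerivAt p (y - x) t :=
    HasDerivAt.const_add x (by simpa using (hasDerivAt_id t).smul_const (y - x))
  have hderiv (t : ℝ) : deriv (φ ∘ p) t = fderiv ℝ φ (p t) (y - x) :=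
    ((hφ (p t)).hasFDerivAt.comp_hasDerivAt t (hp t)).deriv
  have hmono : StrictMono (deriv (φ ∘ p)) := by
    intro s t hst
    have hpst : p t - p s = (t - s) • (y - x) := by simp only [p_def]; module
    have hne : p t ≠ p s := by
      rw [← sub_ne_zero, hpst]
      exact smul_ne_zero (sub_ne_zero.2 hst.ne') (sub_ne_zero.2 hxy.symm)
    have := h _ _ hne
    rw [hpst, map_smul, smul_eq_mul] at this
    rw [hderiv, hderiv, ← sub_pos]
    simpa using pos_of_mul_pos_right this (sub_pos.2 hst).le
  have hline := (hmono.strictConvexOn_univ_of_deriv (hφ.continuous.comp (by fun_prop))).2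
    (Set.mem_univ 0) (Set.mem_univ 1) zero_ne_one ha hb hab
  obtain rfl : a = 1 - b := by linarith
  have hpb : p b = (1 - b) • x + b • y := by simp only [p_def]; module
  rw [← hpb]
  simpa [p_def] using hline

theorem norm_inverse_one_add_le {R : Type*} [NormedRing R] [HasSummableGeomSeries R] {a : R}
    (ha : ‖a‖ ≤ 1 / 2) : ‖Ring.inverse (1 + a)‖ ≤ ‖(1 : R)‖ + 1 := by
  have ha' : ‖-a‖ < 1 := by rw [norm_neg]; linarith
  rw [← sub_neg_eq_add, NormedRing.inverse_one_sub _ ha']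
  refine (tsum_geometric_le_of_norm_lt_one _ ha').trans ?_
  have : (1 - ‖-a‖)⁻¹ ≤ 2 := by
    rw [norm_neg]
    exact inv_le_of_inv_le₀ (by norm_num) (by linarith)
  linarith

variable {n : ℕ}

theorem fderiv_half_sum_sq_add_mul_apply {f : (Fin n → ℝ) → ℝ} (hf : Differentiable ℝ f)
    (ε : ℝ) (y v : Fin n → ℝ) :
    fderiv ℝ (fun y => (∑ i, y i ^ 2) / 2 + ε * f y) y v
      = ∑ i, y i * v i + ε * fderiv ℝ f y v := by
  have hq : HasFDerivAt (fun y : Fin n → ℝ => (∑ i, y i ^ 2) / 2)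
      ((1 / 2 : ℝ) • ∑ i, (2 * y i) • ContinuousLinearMap.proj (R := ℝ)
        (φ := fun _ : Fin n => ℝ) i) y := by
    simpa [div_eq_inv_mul] using (HasFDerivAt.fun_sum fun i (_ : i ∈ Finset.univ) =>
      (hasFDerivAt_apply (𝕜 := ℝ) i y).pow 2).const_mul (1 / 2 : ℝ)
  rw [(hq.fun_add ((hf y).hasFDerivAt.const_mul ε)).fderiv]
  simp [Finset.mul_sum, ← mul_assoc]

theorem differentiable_fderiv_apply {f : (Fin n → ℝ) → ℝ} (hf : ContDiff ℝ 2 f)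
    (v : Fin n → ℝ) :
    Differentiable ℝ (fun y => fderiv ℝ f y v) :=
  ((hf.fderiv_right (m := 1) le_rfl).differentiable one_ne_zero).clm_apply
    (differentiable_const v)

theorem hessMat_half_sum_sq_add_mul {f : (Fin n → ℝ) → ℝ} (hf : ContDiff ℝ 2 f) (ε : ℝ)
    (x : Fin n → ℝ) :
    hessMat (fun y => (∑ i, y i ^ 2) / 2 + ε * f y) x = 1 + ε • hessMat f x := by
  ext i j
  simp only [hessMat, fderiv_half_sum_sq_add_mul_apply (hf.differentiable two_ne_zero),
    Pi.single_apply, mul_ite, mul_one, mul_zero, Finset.sum_ite_eq', Finset.mem_univ, if_true]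
  rw [((hasFDerivAt_apply i x).fun_add
    ((differentiable_fderiv_apply hf _ x).hasFDerivAt.const_mul ε)).fderiv]
  simp [hessMat, Matrix.one_apply, Pi.single_apply]

theorem hessMat_apply {f : (Fin n → ℝ) → ℝ} (hf : ContDiff ℝ 2 f) (x : Fin n → ℝ)
    (i j : Fin n) :
    hessMat f x i j = fderiv ℝ (fderiv ℝ f) x (Pi.single j 1) (Pi.single i 1) := by
  have hd := (hf.fderiv_right (m := 1) le_rfl).differentiable one_ne_zero
  simp [hessMat, fderiv_clm_apply (hd x) (differentiableAt_const _)]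

theorem hessMat_isSymm {f : (Fin n → ℝ) → ℝ} (hf : ContDiff ℝ 2 f) (x : Fin n → ℝ) :
    (hessMat f x).IsSymm :=
  IsSymm.ext fun i j => by
    rw [hessMat_apply hf, hessMat_apply hf]
    exact (hf.contDiffAt.isSymmSndFDerivAt (by simp)).eq _ _

theorem norm_hessMat_apply_le {f : (Fin n → ℝ) → ℝ} (hf : ContDiff ℝ 2 f) {x : Fin n → ℝ}
    {M : ℝ} (hM : ‖fderiv ℝ (fderiv ℝ f) x‖ ≤ M) (i j : Fin n) : ‖hessMat f x i j‖ ≤ M := by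
  rw [hessMat_apply hf]
  refine ((fderiv ℝ (fderiv ℝ f) x).le_opNorm₂ _ _).trans ?_
  simpa [Pi.norm_single] using hM

theorem strictConvexOn_half_sum_sq_add_mul {f : (Fin n → ℝ) → ℝ} (hf : ContDiff ℝ 2 f)
    {M ε : ℝ} (hM : ∀ x, ‖fderiv ℝ (fderiv ℝ f) x‖ ≤ M) (hε : |ε| * M < 1) :
    StrictConvexOn ℝ Set.univ (fun x => (∑ i, x i ^ 2) / 2 + ε * f x) := by
  have hf1 : Differentiable ℝ f := hf.differentiable two_ne_zero
  have hdf : Differentiable ℝ (fderiv ℝ f) :=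
    (hf.fderiv_right (m := 1) le_rfl).differentiable one_ne_zero
  refine StrictConvexOn.of_fderiv_sub_apply_pos (by fun_prop) fun x y hxy => ?_
  set v := x - y with hv
  have hv0 : 0 < ‖v‖ := norm_pos_iff.2 (sub_ne_zero.2 hxy)
  have hlip : ‖fderiv ℝ f x - fderiv ℝ f y‖ ≤ M * ‖v‖ :=
    convex_univ.norm_image_sub_le_of_norm_fderiv_le (fun z _ => hdf z) (fun z _ => hM z)
      (Set.mem_univ y) (Set.mem_univ x)
  have hsplit : (fderiv ℝ (fun x => (∑ i, x i ^ 2) / 2 + ε * f x) x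
      - fderiv ℝ (fun x => (∑ i, x i ^ 2) / 2 + ε * f x) y) v
      = ∑ i, v i ^ 2 + ε * (fderiv ℝ f x - fderiv ℝ f y) v := by
    simp only [_root_.sub_apply, fderiv_half_sum_sq_add_mul_apply hf1, hv, Pi.sub_apply]
    simp only [sq, sub_mul, Finset.sum_sub_distrib]
    ring
  have hpert : |ε * (fderiv ℝ f x - fderiv ℝ f y) v| ≤ |ε| * M * ‖v‖ ^ 2 := by
    rw [abs_mul, mul_assoc, sq, ← mul_assoc M]
    gcongr
    exact ((fderiv ℝ f x - fderiv ℝ f y).le_opNorm v).trans (by gcongr)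
  rw [hsplit]
  nlinarith [sq_norm_le_sum_sq v, neg_abs_le (ε * (fderiv ℝ f x - fderiv ℝ f y) v),
    mul_pos (sub_pos.2 hε) (pow_pos hv0 2)]

section LinftyNorm

attribute [local instance] Matrix.linftyOpSeminormedAddCommGroup Matrix.linftyOpNormedRing
  Matrix.linftyOpNormedAlgebra

namespace Matrix

variable {ι α : Type*} [Fintype ι] [SeminormedAddCommGroup α]

theorem norm_apply_le_linfty_opNorm (A : Matrix ι ι α) (i j : ι) : ‖A i j‖ ≤ ‖A‖ := by
  rw [← coe_nnnorm, ← coe_nnnorm, NNReal.coe_le_coe, linfty_opNNNorm_def]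
  exact (Finset.single_le_sum (fun _ _ => zero_le) (Finset.mem_univ j)).trans
    (Finset.le_sup (f := fun i => ∑ j, ‖A i j‖₊) (Finset.mem_univ i))

theorem linfty_opNorm_le_of_forall_norm_le {A : Matrix ι ι α} {r : ℝ}
    (hr : 0 ≤ r) (h : ∀ i j, ‖A i j‖ ≤ r) : ‖A‖ ≤ Fintype.card ι * r := by
  lift r to NNReal using hr
  rw [← coe_nnnorm, linfty_opNNNorm_def]
  suffices (Finset.univ.sup fun i => ∑ j, ‖A i j‖₊) ≤ Fintype.card ι * r by exact_mod_cast this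
  refine Finset.sup_le fun i _ => ?_
  calc ∑ j, ‖A i j‖₊ ≤ ∑ _j : ι, r := Finset.sum_le_sum fun j _ => h i j
    _ = Fintype.card ι * r := by simp

theorem norm_trace_le_card_mul_linfty_opNorm (A : Matrix ι ι α) :
    ‖A.trace‖ ≤ Fintype.card ι * ‖A‖ :=
  calc ‖A.trace‖ ≤ ∑ i, ‖A i i‖ := norm_sum_le _ _
    _ ≤ ∑ _i : ι, ‖A‖ := Finset.sum_le_sum fun i _ => norm_apply_le_linfty_opNorm A i i
    _ = Fintype.card ι * ‖A‖ := by simp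

theorem abs_trace_one_add_add_trace_inv_sub_trace_sq_le [DecidableEq ι] {C : Matrix ι ι ℝ}
    (hC : ‖C‖ ≤ 1 / 2) :
    |(1 + C).trace + ((1 + C)⁻¹).trace - 2 * Fintype.card ι - (C ^ 2).trace|
      ≤ 2 * Fintype.card ι * ‖C‖ ^ 3 := by
  have hone : ‖(1 : Matrix ι ι ℝ)‖ ≤ 1 := by
    rw [← diagonal_one, linfty_opNorm_diagonal]
    exact (pi_norm_const_le _).trans norm_one.le
  have hC' : ‖-C‖ < 1 := by rw [norm_neg]; linarith
  have hexp := NormedRing.inverse_one_sub_nth_order' 3 hC'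
  rw [sub_neg_eq_add] at hexp
  have hid : (1 + C).trace + (Ring.inverse (1 + C)).trace - 2 * Fintype.card ι - (C ^ 2).trace
      = -(C ^ 3 * Ring.inverse (1 + C)).trace := by
    conv_lhs => rw [hexp]
    simp only [Finset.sum_range_succ, Finset.sum_range_zero, trace_add, trace_zero, trace_one,
      pow_zero, pow_one, trace_neg, even_two.neg_pow, (by decide : Odd 3).neg_pow, neg_mul]
    ring
  rw [← nonsing_inv_eq_ringInverse] at hid
  rw [hid, abs_neg, ← Real.norm_eq_abs]
  calc ‖(C ^ 3 * (1 + C)⁻¹).trace‖ ≤ Fintype.card ι * ‖C ^ 3 * (1 + C)⁻¹‖ :=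
        norm_trace_le_card_mul_linfty_opNorm _
    _ ≤ Fintype.card ι * (‖C‖ ^ 3 * 2) := by
        gcongr
        refine (norm_mul_le _ _).trans (mul_le_mul (norm_pow_le' C three_pos) ?_
          (norm_nonneg _) (by positivity))
        rw [nonsing_inv_eq_ringInverse]
        linarith [norm_inverse_one_add_le hC]
    _ = 2 * Fintype.card ι * ‖C‖ ^ 3 := by ring

end Matrix

theorem abs_hessMat_trace_add_trace_inv_sub_div_sq_sub_le {f : (Fin n → ℝ) → ℝ}
    (hf : ContDiff ℝ 2 f) {x : Fin n → ℝ} {M ε : ℝ} (hM : ‖fderiv ℝ (fderiv ℝ f) x‖ ≤ M)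
    (hε : 0 < ε) (hεM : ε * (n * M) ≤ 1 / 2) :
    |((hessMat (fun y => (∑ i, y i ^ 2) / 2 + ε * f y) x).trace
        + ((hessMat (fun y => (∑ i, y i ^ 2) / 2 + ε * f y) x)⁻¹).trace - 2 * n) / ε ^ 2
      - ∑ i, ∑ j, hessMat f x i j ^ 2| ≤ 2 * n * (n * M) ^ 3 * ε := by
  have hM0 : 0 ≤ M := (norm_nonneg (fderiv ℝ (fderiv ℝ f) x)).trans hM
  have hH : ‖hessMat f x‖ ≤ n * M := by
    simpa using linfty_opNorm_le_of_forall_norm_le hM0 (norm_hessMat_apply_le hf hM)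
  have hC : ‖ε • hessMat f x‖ ≤ ε * (n * M) := by
    rw [norm_smul, Real.norm_of_nonneg hε.le]
    gcongr
  have key := abs_trace_one_add_add_trace_inv_sub_trace_sq_le (hC.trans hεM)
  rw [smul_pow, trace_smul, (hessMat_isSymm hf x).trace_sq, smul_eq_mul, Fintype.card_fin] at key
  rw [hessMat_half_sum_sq_add_mul hf]
  have hε2 : 0 < ε ^ 2 := by positivity
  rw [div_sub' hε2.ne', abs_div, abs_of_pos hε2, div_le_iff₀ hε2]
  calc _ ≤ 2 * n * ‖ε • hessMat f x‖ ^ 3 := key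
    _ ≤ 2 * n * (ε * (n * M)) ^ 3 := by gcongr
    _ = 2 * n * (n * M) ^ 3 * ε * ε ^ 2 := by ring

end LinftyNorm

theorem stmt_15_general {n : ℕ} (f : (Fin n → ℝ) → ℝ) (hf : ContDiff ℝ 3 f)
    (hbd2 : ∃ M, ∀ x, ‖iteratedFDeriv ℝ 2 f x‖ ≤ M) :
    (∃ ε₀ > (0 : ℝ), ∀ ε ∈ Set.Ioo (0 : ℝ) ε₀,
      StrictConvexOn ℝ Set.univ (fun x => (∑ i, x i ^ 2) / 2 + ε * f x) ∧
      ∀ x, spectrum ℝ (hessMat (fun y => (∑ i, y i ^ 2) / 2 + ε * f y) x)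
        = (fun d => 1 + ε * d) '' spectrum ℝ (hessMat f x)) ∧
    (∀ s : Set (Fin n → ℝ), IsCompact s →
      TendstoUniformlyOn
        (fun (ε : ℝ) (x : Fin n → ℝ) =>
          ((hessMat (fun y => (∑ i, y i ^ 2) / 2 + ε * f y) x).trace
            + ((hessMat (fun y => (∑ i, y i ^ 2) / 2 + ε * f y) x)⁻¹).trace
            - 2 * n) / ε ^ 2)
        (fun x => ∑ i, ∑ j, (hessMat f x i j) ^ 2)
        (nhdsWithin 0 (Set.Ioi 0)) s) := by
  have hf2 : ContDiff ℝ 2 f := hf.of_le (by norm_num)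
  obtain ⟨M, hM⟩ := hbd2
  replace hM (x : Fin n → ℝ) : ‖fderiv ℝ (fderiv ℝ f) x‖ ≤ M := by
    simpa [← norm_iteratedFDeriv_fderiv] using hM x
  have hM0 : 0 ≤ M := (norm_nonneg (fderiv ℝ (fderiv ℝ f) 0)).trans (hM 0)
  refine ⟨⟨1 / (M + 1), by positivity, fun ε hε => ⟨?_, fun x => ?_⟩⟩, fun s _ => ?_⟩
  · refine strictConvexOn_half_sum_sq_add_mul hf2 hM ?_
    rw [abs_of_pos hε.1]
    calc ε * M ≤ ε * (M + 1) := mul_le_mul_of_nonneg_left (by linarith) hε.1.le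
      _ < 1 := (lt_div_iff₀ (by positivity)).1 hε.2
  · rw [hessMat_half_sum_sq_add_mul hf2, spectrum_one_add_smul hε.1.ne']
  · have hlim : Tendsto (fun ε : ℝ => ε * (n * M)) (nhdsWithin 0 (Set.Ioi 0)) (nhds 0) :=
      tendsto_nhdsWithin_of_tendsto_nhds ((continuous_mul_const _).tendsto' 0 0 (zero_mul _))
    refine tendstoUniformlyOn_of_eventually_dist_le (b := fun ε => 2 * n * (n * M) ^ 3 * ε)
      (tendsto_nhdsWithin_of_tendsto_nhds ((continuous_const_mul _).tendsto' 0 0 (mul_zero _))) ?_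
    filter_upwards [self_mem_nhdsWithin, hlim.eventually (ge_mem_nhds one_half_pos)]
      with ε hε hεM x _
    rw [dist_comm, Real.dist_eq]
    exact abs_hessMat_trace_add_trace_inv_sub_div_sq_sub_le hf2 (hM x) hε hεM

/-- Second-order expansion underlying "WJ ⇒ Poincaré": for `f` of class `C³`
with bounded second and third derivatives and `φ_ε(x) = |x|²/2 + εf(x)`, for
small `ε > 0` the function `φ_ε` is strictly convex, the eigenvalues of its
Hessian are `1 + ε·fᵢ` where `fᵢ` are the eigenvalues of `∇²f(x)`, and
`Δφ_ε(x) + Δφ_ε*(∇φ_ε(x)) − 2n = ε² ‖∇²f(x)‖²_HS + o(ε²)` uniformly on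
compacts (here `Δφ_ε*(∇φ_ε(x))` is the trace of the inverse Hessian). -/
theorem stmt_15 {n : ℕ} (f : (Fin n → ℝ) → ℝ) (hf : ContDiff ℝ 3 f)
    (hbd2 : ∃ M, ∀ x, ‖iteratedFDeriv ℝ 2 f x‖ ≤ M)
    (hbd3 : ∃ M, ∀ x, ‖iteratedFDeriv ℝ 3 f x‖ ≤ M) :
    (∃ ε₀ > (0 : ℝ), ∀ ε ∈ Set.Ioo (0 : ℝ) ε₀,
      StrictConvexOn ℝ Set.univ (fun x => (∑ i, x i ^ 2) / 2 + ε * f x) ∧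
      ∀ x, spectrum ℝ (hessMat (fun y => (∑ i, y i ^ 2) / 2 + ε * f y) x)
        = (fun d => 1 + ε * d) '' spectrum ℝ (hessMat f x)) ∧
    (∀ s : Set (Fin n → ℝ), IsCompact s →
      TendstoUniformlyOn
        (fun (ε : ℝ) (x : Fin n → ℝ) =>
          ((hessMat (fun y => (∑ i, y i ^ 2) / 2 + ε * f y) x).trace
            + ((hessMat (fun y => (∑ i, y i ^ 2) / 2 + ε * f y) x)⁻¹).trace
            - 2 * n) / ε ^ 2)
        (fun x => ∑ i, ∑ j, (hessMat f x i j) ^ 2)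
        (nhdsWithin 0 (Set.Ioi 0)) s) :=
  stmt_15_general f hf hbd2
end
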